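/- Define L : ℝ → ℝ by L(a) = ( log(√(8a − 3) + 2·√(2a − 1)) + 2·√(2a − 1)·√(8a − 3) ) / (2a), where log is the natural logarithm. There exists a real number a₀ with 94 < a₀ < 95 such that L is strictly increasing on the interval (1, a₀], strictly decreasing on the interval [a₀, ∞), and L(a₀) > 4. In particular, L(a₀) is the strict global maximum of L on (1, ∞). -/

import Mathlib

/-!
Differentiating gives `L'(a) = g(a) / (2a²)` with
`g(a) = 2√((8a - 3)/(2a - 1)) - log(√(8a - 3) + 2√(2a - 1))`.
Since `(8a - 3)/(2a - 1) = 4 + 1/(2a - 1)` decreases and the logarithm increases, `g` is strictly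
decreasing on `(1/2, ∞)`, so `L'` changes sign exactly once, at the zero `a₀` of `g`.
Interval arithmetic (with `e⁴ ≈ 54.598` bounded from `e`) gives `g(94) > 0 > g(95)` and
`L(94) > 4`.
-/

/-- The length of the portion of the parabola `y = a x² − 1` inside the closed unit
disk, as a function of the parameter `a`. -/
noncomputable def parabolaLength (a : ℝ) : ℝ :=
  (Real.log (Real.sqrt (8 * a - 3) + 2 * Real.sqrt (2 * a - 1))
    + 2 * Real.sqrt (2 * a - 1) * Real.sqrt (8 * a - 3)) / (2 * a)

open Real Set

theorem StrictMonoOn.lt_of_strictAntiOn_Ici {α β : Type*} [LinearOrder α] [Preorder β]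
    {f : α → β} {c m a : α} (hmono : StrictMonoOn f (Ioc c m)) (hanti : StrictAntiOn f (Ici m))
    (ha : c < a) (hne : a ≠ m) : f a < f m := by
  rcases hne.lt_or_gt with h | h
  · exact hmono ⟨ha, h.le⟩ ⟨ha.trans h, le_rfl⟩ h
  · exact hanti self_mem_Ici h.le h

theorem exp_four_mem_Ioo : exp 4 ∈ Ioo 54.598 54.5983 := by
  have h4 : exp 4 = exp 1 ^ 4 := by rw [← exp_nat_mul]; norm_num
  rw [h4]
  constructor
  · calc (54.598 : ℝ) < 2.7182818283 ^ 4 := by norm_num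
      _ < exp 1 ^ 4 := by gcongr; exact exp_one_gt_d9
  · calc exp 1 ^ 4 < 2.7182818286 ^ 4 := by gcongr; exact exp_one_lt_d9
      _ < 54.5983 := by norm_num

noncomputable def parabolaLengthDerivNumerator (a : ℝ) : ℝ :=
  2 * √((8 * a - 3) / (2 * a - 1)) - log (√(8 * a - 3) + 2 * √(2 * a - 1))

theorem hasDerivAt_parabolaLength {a : ℝ} (ha : 1 / 2 < a) :
    HasDerivAt parabolaLength (parabolaLengthDerivNumerator a / (2 * a ^ 2)) a := by
  have h2 : 0 < 2 * a - 1 := by linarith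
  have h8 : 0 < 8 * a - 3 := by linarith
  have hU : HasDerivAt (fun x ↦ √(8 * x - 3)) (8 / (2 * √(8 * a - 3))) a :=
    (((hasDerivAt_id a).const_mul 8).sub_const 3).sqrt (by simpa using h8.ne') |>.congr_deriv
      (by simp)
  have hV : HasDerivAt (fun x ↦ √(2 * x - 1)) (2 / (2 * √(2 * a - 1))) a :=
    (((hasDerivAt_id a).const_mul 2).sub_const 1).sqrt (by simpa using h2.ne') |>.congr_deriv
      (by simp)
  have hW : 0 < √(8 * a - 3) + 2 * √(2 * a - 1) := by positivity
  have hL := (((hU.add (hV.const_mul 2)).log hW.ne').add ((hV.const_mul 2).mul hU)).div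
    ((hasDerivAt_id a).const_mul 2) (by simp; linarith)
  refine hL.congr_deriv ?_
  rw [parabolaLengthDerivNumerator, sqrt_div h8.le]
  have hs := sq_sqrt h8.le
  have ht := sq_sqrt h2.le
  have hs0 : 0 < √(8 * a - 3) := sqrt_pos.2 h8
  have ht0 : 0 < √(2 * a - 1) := sqrt_pos.2 h2
  set s := √(8 * a - 3)
  set t := √(2 * a - 1)
  simp only [Pi.add_apply, Pi.mul_apply, id]
  field_simp
  linear_combination (s + 2 * t) * ((4 * a - 4 - 4 * t ^ 2) * hs + (12 - 16 * a) * ht)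

theorem continuousOn_parabolaLengthDerivNumerator :
    ContinuousOn parabolaLengthDerivNumerator (Ioi (1 / 2)) := by
  intro x hx
  have h2 : 0 < 2 * x - 1 := by linarith [mem_Ioi.1 hx]
  have h8 : 0 < 8 * x - 3 := by linarith
  have hW : 0 < √(8 * x - 3) + 2 * √(2 * x - 1) := by positivity
  unfold parabolaLengthDerivNumerator
  apply ContinuousAt.continuousWithinAt
  fun_prop (disch := first | exact h2.ne' | exact hW.ne')

theorem parabolaLengthDerivNumerator_strictAntiOn :
    StrictAntiOn parabolaLengthDerivNumerator (Ioi (1 / 2)) := by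
  intro a ha b hb hab
  rw [mem_Ioi] at ha hb
  have h8 : 0 < 8 * a - 3 := by linarith
  have h2 : 0 < 2 * a - 1 := by linarith
  have hratio : (8 * b - 3) / (2 * b - 1) < (8 * a - 3) / (2 * a - 1) := by
    rw [div_lt_div_iff₀ (by linarith) (by linarith)]
    linarith
  have hsqrt := sqrt_lt_sqrt (div_pos (by linarith) (by linarith)).le hratio
  have hlog : log (√(8 * a - 3) + 2 * √(2 * a - 1)) < log (√(8 * b - 3) + 2 * √(2 * b - 1)) := by
    apply log_lt_log (by positivity)
    gcongr
  unfold parabolaLengthDerivNumerator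
  linarith

theorem parabolaLength_strictMonoOn_Ioc {m : ℝ} (hm : parabolaLengthDerivNumerator m = 0) :
    StrictMonoOn parabolaLength (Ioc (1 / 2) m) := by
  refine strictMonoOn_of_hasDerivWithinAt_pos (convex_Ioc _ _)
    (f' := fun x ↦ parabolaLengthDerivNumerator x / (2 * x ^ 2))
    (fun x hx ↦ (hasDerivAt_parabolaLength hx.1).continuousAt.continuousWithinAt) ?_ ?_ <;>
  rw [interior_Ioc] <;> intro x ⟨hx, hxm⟩
  · exact (hasDerivAt_parabolaLength hx).hasDerivWithinAt
  · have hx₀ : 0 < x := by linarith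
    exact div_pos (hm ▸ parabolaLengthDerivNumerator_strictAntiOn hx (hx.trans hxm) hxm)
      (by positivity)

theorem parabolaLength_strictAntiOn_Ici {m : ℝ} (hm₀ : 1 / 2 < m)
    (hm : parabolaLengthDerivNumerator m = 0) : StrictAntiOn parabolaLength (Ici m) := by
  refine strictAntiOn_of_hasDerivWithinAt_neg (convex_Ici _)
    (f' := fun x ↦ parabolaLengthDerivNumerator x / (2 * x ^ 2))
    (fun x hx ↦ (hasDerivAt_parabolaLength (hm₀.trans_le hx)).continuousAt.continuousWithinAt)
    ?_ ?_ <;> rw [interior_Ici] <;> intro x (hx : m < x)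
  · exact (hasDerivAt_parabolaLength (hm₀.trans hx)).hasDerivWithinAt
  · have hx₀ : 0 < x := by linarith
    exact div_neg_of_neg_of_pos
      (hm ▸ parabolaLengthDerivNumerator_strictAntiOn hm₀ (hm₀.trans hx) hx) (by positivity)

theorem log_sqrt_749_add_two_mul_sqrt_187_mem_Ioo :
    log (√749 + 2 * √187) ∈ Ioo 4 4.0025 := by
  have h749 : √749 ∈ Ioo 27.36 27.368 :=
    ⟨(lt_sqrt (by norm_num)).2 (by norm_num), (sqrt_lt' (by norm_num)).2 (by norm_num)⟩
  have h187 : √187 ∈ Ioo 13.67 13.676 :=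
    ⟨(lt_sqrt (by norm_num)).2 (by norm_num), (sqrt_lt' (by norm_num)).2 (by norm_num)⟩
  have hexp := exp_four_mem_Ioo
  have hpos : 0 < √749 + 2 * √187 := by positivity
  constructor
  · rw [lt_log_iff_exp_lt hpos]
    linarith [hexp.2, h749.1, h187.1]
  · rw [log_lt_iff_lt_exp hpos]
    calc √749 + 2 * √187 < 54.598 * (0.0025 + 1) := by linarith [h749.2, h187.2]
      _ ≤ exp 4 * exp 0.0025 := by gcongr; exacts [hexp.1.le, add_one_le_exp _]
      _ = exp 4.0025 := by rw [← exp_add]; norm_num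

theorem parabolaLengthDerivNumerator_94_pos : 0 < parabolaLengthDerivNumerator 94 := by
  have hsqrt : 2.00125 < √(749 / 187) := (lt_sqrt (by norm_num)).2 (by norm_num)
  have hlog := log_sqrt_749_add_two_mul_sqrt_187_mem_Ioo.2
  rw [parabolaLengthDerivNumerator, show (8 * 94 - 3 : ℝ) = 749 by norm_num,
    show (2 * 94 - 1 : ℝ) = 187 by norm_num]
  linarith

theorem parabolaLengthDerivNumerator_95_neg : parabolaLengthDerivNumerator 95 < 0 := by
  have hsqrt : √(757 / 189) < 2.0015 := (sqrt_lt' (by norm_num)).2 (by norm_num)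
  have h757 : 27.5 < √757 := (lt_sqrt (by norm_num)).2 (by norm_num)
  have h189 : 13.7 < √189 := (lt_sqrt (by norm_num)).2 (by norm_num)
  have hlog : 4.003 < log (√757 + 2 * √189) := by
    rw [lt_log_iff_exp_lt (by positivity)]
    calc exp 4.003 = exp 4 * exp 0.003 := by rw [← exp_add]; norm_num
      _ ≤ 54.5983 * (1 / (1 - 0.003)) := by
        gcongr
        exacts [exp_four_mem_Ioo.2.le,
          exp_bound_div_one_sub_of_interval (by norm_num) (by norm_num)]
      _ < √757 + 2 * √189 := by linarith
  rw [parabolaLengthDerivNumerator, show (8 * 95 - 3 : ℝ) = 757 by norm_num,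
    show (2 * 95 - 1 : ℝ) = 189 by norm_num]
  linarith

theorem four_lt_parabolaLength_94 : 4 < parabolaLength 94 := by
  have hlog := log_sqrt_749_add_two_mul_sqrt_187_mem_Ioo.1
  have hprod : 374.05 < √187 * √749 := by
    rw [← sqrt_mul (by norm_num)]
    exact (lt_sqrt (by norm_num)).2 (by norm_num)
  norm_num [parabolaLength]
  rw [lt_div_iff₀ (by norm_num)]
  linarith

theorem exists_parabolaLengthDerivNumerator_eq_zero :
    ∃ m ∈ Ioo 94 95, parabolaLengthDerivNumerator m = 0 :=
  intermediate_value_Ioo' (by norm_num)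
    (continuousOn_parabolaLengthDerivNumerator.mono fun x hx ↦ by norm_num at hx ⊢; linarith)
    ⟨parabolaLengthDerivNumerator_95_neg, parabolaLengthDerivNumerator_94_pos⟩

/-- The length function `L(a)` has a unique global maximum point `a₀ ∈ (94, 95)` on
`(1, ∞)`: it is strictly increasing on `(1, a₀]`, strictly decreasing on `[a₀, ∞)`,
and its maximum value exceeds `4`. -/
theorem parabola_length_max :
    ∃ a₀ : ℝ, 94 < a₀ ∧ a₀ < 95 ∧
      StrictMonoOn parabolaLength (Set.Ioc 1 a₀) ∧
      StrictAntiOn parabolaLength (Set.Ici a₀) ∧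
      4 < parabolaLength a₀ ∧
      ∀ a ∈ Set.Ioi (1 : ℝ), a ≠ a₀ → parabolaLength a < parabolaLength a₀ := by
  obtain ⟨a₀, ⟨h94, h95⟩, hzero⟩ := exists_parabolaLengthDerivNumerator_eq_zero
  have hmono : StrictMonoOn parabolaLength (Ioc 1 a₀) :=
    (parabolaLength_strictMonoOn_Ioc hzero).mono (Ioc_subset_Ioc_left (by norm_num))
  have hanti := parabolaLength_strictAntiOn_Ici (by linarith) hzero
  refine ⟨a₀, h94, h95, hmono, hanti, ?_, fun a ha hne ↦ hmono.lt_of_strictAntiOn_Ici hanti ha hne⟩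
  exact four_lt_parabolaLength_94.trans (hmono ⟨by norm_num, h94.le⟩ ⟨by linarith, le_rfl⟩ h94)
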